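/- arXiv:1010.3889 — 2 statements merged into one kernel-verified Lean document; each statement's English description precedes it below -/
import Mathlib

section
/- (Equation (20)) For all n, k ∈ ℕ with k ≤ n, the fermionic p-adic q-integral of x ↦ B_{k,n}(x,q) exists and ∫_{ℤ_p} B_{k,n}(x,q) dμ_{−q}(x) = C(n,k)·Σ_{l=0}^{k} C(k,l)·(−1)^{k+l}·ξ_{n−l,1/q}(2), where ξ_{m,1/q} denotes the q-Euler polynomial with parameter 1/q in place of q. -/
/-!
Writing `[x]_q = 1 - [1 - x]_{1/q}`, the binomial theorem turns `B_{k,n}(x,q)` into a combination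
of powers `[1 - x]_{1/q} ^ m`, and these into combinations of `q ^ (l x)`. The fermionic integral
is linear, and for `q ^ (a x)` the Riemann sums are geometric sums of odd length `p ^ N`, equal to
`(1 + q) / (1 + q ^ p ^ N) * (1 + (q ^ p ^ N) ^ (a + 1)) / (1 + q ^ (a + 1))`. Since `q ^ p ^ N → 1`
`p`-adically, they converge to `(1 + q) / (1 + q ^ (a + 1))`, and collecting terms gives
`ξ_{m,1/q}(2)`.
-/

open Finset Filter

/-- `[a]_q = (1 - q^a)/(1 - q)` for `a : ℤ`. -/
noncomputable def qnum {p : ℕ} [Fact p.Prime] (q : ℚ_[p]) (a : ℤ) : ℚ_[p] :=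
  (1 - q ^ a) / (1 - q)

/-- Kim's q-Euler polynomial `ξ_{n,q}(x)` (closed form). -/
noncomputable def xi {p : ℕ} [Fact p.Prime] (q : ℚ_[p]) (n : ℕ) (x : ℤ) : ℚ_[p] :=
  ((1 + q) / (1 - q) ^ n) *
    ∑ l ∈ Finset.range (n + 1),
      (n.choose l : ℚ_[p]) * (-1) ^ l * q ^ ((l : ℤ) * x) / (1 + q ^ (l + 1))

/-- The fermionic p-adic `r`-integral statement:
`∫_{ℤ_p} g dμ_{-r} = L` means the Riemann-type sums
`(1/[p^N]_{-r}) · Σ_{x=0}^{p^N-1} g(x) (-r)^x` converge to `L`. -/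
def fermionicIntegral (p : ℕ) [Fact p.Prime] (r : ℚ_[p]) (g : ℕ → ℚ_[p]) (L : ℚ_[p]) : Prop :=
  Filter.Tendsto
    (fun N : ℕ => ((1 + r) / (1 - (-r) ^ (p ^ N))) * ∑ x ∈ Finset.range (p ^ N), g x * (-r) ^ x)
    Filter.atTop (nhds L)

/-- The q-Bernstein polynomial `B_{k,n}(x,q) = C(n,k) [x]_q^k [1-x]_{1/q}^{n-k}`. -/
noncomputable def bern {p : ℕ} [Fact p.Prime] (q : ℚ_[p]) (k n : ℕ) (x : ℤ) : ℚ_[p] :=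
  (n.choose k : ℚ_[p]) * (qnum q x) ^ k * (qnum q⁻¹ (1 - x)) ^ (n - k)

open Topology

section Ultrametric

variable {K : Type*} [NormedField K] [IsUltrametricDist K]

lemma norm_eq_one_of_norm_sub_one_lt_one {q : K} (hq : ‖q - 1‖ < 1) : ‖q‖ = 1 := by
  have h := IsUltrametricDist.norm_add_eq_max_of_norm_ne_norm (x := q - 1) (y := 1)
    (by rw [norm_one]; exact hq.ne)
  rwa [sub_add_cancel, norm_one, max_eq_right hq.le] at h

lemma norm_pow_sub_one_le {q : K} (hq : ‖q‖ ≤ 1) (m : ℕ) : ‖q ^ m - 1‖ ≤ ‖q - 1‖ := by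
  induction m with
  | zero => simp
  | succ m ih =>
    have hqm : ‖q ^ m * (q - 1)‖ ≤ ‖q - 1‖ := by
      rw [norm_mul, norm_pow]
      exact mul_le_of_le_one_left (norm_nonneg _) (pow_le_one₀ (norm_nonneg _) hq)
    calc ‖q ^ (m + 1) - 1‖ = ‖q ^ m * (q - 1) + (q ^ m - 1)‖ := by ring_nf
      _ ≤ max ‖q ^ m * (q - 1)‖ ‖q ^ m - 1‖ := IsUltrametricDist.norm_add_le_max _ _
      _ ≤ ‖q - 1‖ := max_le hqm ih

lemma norm_pow_sub_one_le_max_mul {y : K} (hy : ‖y‖ ≤ 1) (n : ℕ) :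
    ‖y ^ n - 1‖ ≤ max ‖(n : K)‖ ‖y - 1‖ * ‖y - 1‖ := by
  have hsum : ∑ i ∈ range n, y ^ i = n + ∑ i ∈ range n, (y ^ i - 1) := by
    simp [Finset.sum_sub_distrib]
  have hbound : ‖∑ i ∈ range n, y ^ i‖ ≤ max ‖(n : K)‖ ‖y - 1‖ := by
    rw [hsum]
    refine (IsUltrametricDist.norm_add_le_max _ _).trans (max_le_max le_rfl ?_)
    exact IsUltrametricDist.norm_sum_le_of_forall_le_of_nonneg (norm_nonneg _)
      fun i _ => norm_pow_sub_one_le hy i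
  rw [← geom_sum_mul, norm_mul]
  exact mul_le_mul_of_nonneg_right hbound (norm_nonneg _)

lemma tendsto_pow_pow_nhds_one {q : K} (hq : ‖q - 1‖ < 1) {n : ℕ} (hn : ‖(n : K)‖ < 1) :
    Tendsto (fun N : ℕ => q ^ n ^ N) atTop (𝓝 1) := by
  set c := max ‖(n : K)‖ ‖q - 1‖
  have hc0 : 0 ≤ c := le_max_of_le_left (norm_nonneg _)
  have hq1 : ‖q‖ ≤ 1 := (norm_eq_one_of_norm_sub_one_lt_one hq).le
  have hbound : ∀ N : ℕ, ‖q ^ n ^ N - 1‖ ≤ c ^ N := by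
    intro N
    induction N with
    | zero => simpa using hq.le
    | succ N ih =>
      have hy : ‖q ^ n ^ N‖ ≤ 1 := by rw [norm_pow]; exact pow_le_one₀ (norm_nonneg _) hq1
      have hmax : max ‖(n : K)‖ ‖q ^ n ^ N - 1‖ ≤ c :=
        max_le_max le_rfl (norm_pow_sub_one_le hq1 _)
      calc ‖q ^ n ^ (N + 1) - 1‖ = ‖(q ^ n ^ N) ^ n - 1‖ := by rw [← pow_mul, pow_succ]
        _ ≤ max ‖(n : K)‖ ‖q ^ n ^ N - 1‖ * ‖q ^ n ^ N - 1‖ := norm_pow_sub_one_le_max_mul hy n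
        _ ≤ c * c ^ N := mul_le_mul hmax ih (norm_nonneg _) hc0
        _ = c ^ (N + 1) := (pow_succ' c N).symm
  rw [tendsto_iff_norm_sub_tendsto_zero]
  exact squeeze_zero (fun N => norm_nonneg _) hbound
    (tendsto_pow_atTop_nhds_zero_of_lt_one hc0 (max_lt hn hq))

lemma one_add_pow_ne_zero {q : K} (hq : ‖q - 1‖ < 1) (h2 : ‖(2 : K)‖ = 1) (m : ℕ) :
    1 + q ^ m ≠ 0 := by
  intro h
  have hqm : q ^ m - 1 = -2 := by linear_combination h
  have := (norm_pow_sub_one_le (norm_eq_one_of_norm_sub_one_lt_one hq).le m).trans_lt hq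
  rw [hqm, norm_neg, h2] at this
  exact lt_irrefl _ this

end Ultrametric

lemma Padic.norm_two_eq_one_of_odd {p : ℕ} [Fact p.Prime] (hp : Odd p) : ‖(2 : ℚ_[p])‖ = 1 := by
  exact_mod_cast Padic.norm_natCast_eq_one_iff.mpr (Nat.coprime_two_right.mpr hp)

lemma Odd.geom_sum_neg_eq {F : Type*} [Field F] {M : ℕ} (hM : Odd M) {r : F} (hr : 1 + r ≠ 0) :
    ∑ x ∈ range M, (-r) ^ x = (1 + r ^ M) / (1 + r) := by
  rw [eq_div_iff hr, ← sub_neg_eq_add 1 r, geom_sum_mul_neg, hM.neg_pow, sub_neg_eq_add]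

section Fermionic

variable {p : ℕ} [Fact p.Prime]

lemma fermionicIntegral_const_mul {r : ℚ_[p]} {g : ℕ → ℚ_[p]} {L : ℚ_[p]} (c : ℚ_[p])
    (h : fermionicIntegral p r g L) : fermionicIntegral p r (fun x => c * g x) (c * L) := by
  refine (h.const_mul c).congr fun N => ?_
  simp only [Finset.mul_sum]
  exact Finset.sum_congr rfl fun x _ => by ring

lemma fermionicIntegral_sum {ι : Type*} (s : Finset ι) {r : ℚ_[p]} {g : ι → ℕ → ℚ_[p]}
    {L : ι → ℚ_[p]} (h : ∀ i ∈ s, fermionicIntegral p r (g i) (L i)) :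
    fermionicIntegral p r (fun x => ∑ i ∈ s, g i x) (∑ i ∈ s, L i) := by
  refine (tendsto_finsetSum s h).congr fun N => ?_
  simp only [Finset.sum_mul, Finset.mul_sum]
  exact Finset.sum_comm

lemma fermionicIntegral_pow_mul (hp : Odd p) {q : ℚ_[p]} (hq : ‖q - 1‖ < 1) (a : ℕ) :
    fermionicIntegral p q (fun x => q ^ (a * x)) ((1 + q) / (1 + q ^ (a + 1))) := by
  have hden : 1 + q ^ (a + 1) ≠ 0 :=
    one_add_pow_ne_zero hq (Padic.norm_two_eq_one_of_odd hp) (a + 1)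
  set f : ℚ_[p] → ℚ_[p] := fun y => (1 + q) / (1 + y) * ((1 + y ^ (a + 1)) / (1 + q ^ (a + 1)))
  have hsum : ∀ N : ℕ, (1 + q) / (1 - (-q) ^ p ^ N) * ∑ x ∈ range (p ^ N), q ^ (a * x) * (-q) ^ x
      = f (q ^ p ^ N) := by
    intro N
    have hterm : ∀ x : ℕ, q ^ (a * x) * (-q) ^ x = (-q ^ (a + 1)) ^ x := fun x => by
      rw [neg_pow q, neg_pow (q ^ (a + 1)), ← pow_mul]
      ring
    simp only [hterm, (hp.pow (n := N)).geom_sum_neg_eq hden, (hp.pow (n := N)).neg_pow,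
      sub_neg_eq_add, f, pow_right_comm q (a + 1)]
  have hf : ContinuousAt f 1 := by
    refine ContinuousAt.mul (continuousAt_const.div (by fun_prop) ?_) (by fun_prop)
    norm_num
  have hf1 : f 1 = (1 + q) / (1 + q ^ (a + 1)) := by
    simp only [f, one_pow]
    field_simp
  rw [fermionicIntegral, ← hf1]
  refine (hf.tendsto.comp (tendsto_pow_pow_nhds_one hq ?_)).congr fun N => (hsum N).symm
  simpa using Padic.norm_p_lt_one (p := p)

end Fermionic

lemma one_sub_pow_mul_pow_sub {R : Type*} [CommRing R] (v : R) {k n : ℕ} (hkn : k ≤ n) :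
    (1 - v) ^ k * v ^ (n - k) =
      ∑ l ∈ range (k + 1), (k.choose l : R) * (-1) ^ (k + l) * v ^ (n - l) := by
  rw [sub_pow, Finset.sum_mul]
  refine Finset.sum_congr rfl fun l hl => ?_
  have hlk : l ≤ k := Nat.lt_succ_iff.mp (mem_range.mp hl)
  rw [show n - l = k - l + (n - k) by omega, pow_add]
  ring

section QNumbers

variable {p : ℕ} [Fact p.Prime] {q : ℚ_[p]}

lemma inv_zpow_one_sub (hq0 : q ≠ 0) (x : ℤ) : q⁻¹ ^ (1 - x) = q⁻¹ * q ^ x := by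
  rw [inv_zpow', neg_sub, zpow_sub₀ hq0, zpow_one, div_eq_inv_mul]

lemma qnum_eq_one_sub_qnum_inv (hq0 : q ≠ 0) (hq1 : q ≠ 1) (x : ℤ) :
    qnum q x = 1 - qnum q⁻¹ (1 - x) := by
  have h1q : (1 : ℚ_[p]) - q ≠ 0 := sub_ne_zero.mpr hq1.symm
  have hq1' : q - 1 ≠ 0 := sub_ne_zero.mpr hq1
  rw [qnum, qnum, inv_zpow_one_sub hq0]
  field_simp
  ring

lemma qnum_inv_one_sub_pow (hq0 : q ≠ 0) (m x : ℕ) :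
    qnum q⁻¹ (1 - x) ^ m = ∑ l ∈ range (m + 1),
      (m.choose l : ℚ_[p]) * (-1) ^ l * q⁻¹ ^ l / (1 - q⁻¹) ^ m * q ^ (l * x) := by
  rw [qnum, inv_zpow_one_sub hq0, zpow_natCast, div_pow, sub_eq_neg_add, add_pow, Finset.sum_div]
  refine Finset.sum_congr rfl fun l _ => ?_
  rw [neg_pow, mul_pow, pow_mul']
  ring

/-- `ξ_{m,1/q}(2)` is the term-by-term fermionic integral of the binomial expansion of
`[1 - x]_{1/q} ^ m`. -/
lemma xi_inv_two (hq0 : q ≠ 0) (m : ℕ) :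
    xi q⁻¹ m 2 = ∑ l ∈ range (m + 1),
      (m.choose l : ℚ_[p]) * (-1) ^ l * q⁻¹ ^ l / (1 - q⁻¹) ^ m *
        ((1 + q) / (1 + q ^ (l + 1))) := by
  rw [xi, Finset.mul_sum]
  refine Finset.sum_congr rfl fun l _ => ?_
  have hql : q ^ (l + 1) ≠ 0 := pow_ne_zero _ hq0
  have hinv : 1 + q⁻¹ ^ (l + 1) = (1 + q ^ (l + 1)) / q ^ (l + 1) := by
    rw [inv_pow, eq_div_iff hql, add_mul, inv_mul_cancel₀ hql, one_mul, add_comm]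
  rw [show ((l : ℤ) * 2) = ((2 * l : ℕ) : ℤ) by push_cast; ring, zpow_natCast, hinv]
  simp only [inv_pow]
  field_simp
  ring

lemma fermionicIntegral_qnum_inv_one_sub_pow (hp : Odd p) (hq : ‖q - 1‖ < 1) (hq0 : q ≠ 0)
    (m : ℕ) : fermionicIntegral p q (fun x => qnum q⁻¹ (1 - x) ^ m) (xi q⁻¹ m 2) := by
  simp only [qnum_inv_one_sub_pow hq0, xi_inv_two hq0]
  exact fermionicIntegral_sum _ fun l _ =>
    fermionicIntegral_const_mul _ (fermionicIntegral_pow_mul hp hq l)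

lemma bern_eq_sum (hq0 : q ≠ 0) (hq1 : q ≠ 1) {k n : ℕ} (hkn : k ≤ n) (x : ℤ) :
    bern q k n x = n.choose k *
      ∑ l ∈ range (k + 1), (k.choose l : ℚ_[p]) * (-1) ^ (k + l) * qnum q⁻¹ (1 - x) ^ (n - l) := by
  rw [bern, qnum_eq_one_sub_qnum_inv hq0 hq1, mul_assoc, one_sub_pow_mul_pow_sub _ hkn]

end QNumbers

theorem stmt13 (p : ℕ) [Fact p.Prime] (hp : Odd p) (q : ℚ_[p]) (hq : ‖1 - q‖ < 1) (hq1 : q ≠ 1) (n k : ℕ) (hkn : k ≤ n) :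
    fermionicIntegral p q (fun x => bern q k n x)
      ((n.choose k : ℚ_[p]) *
        ∑ l ∈ Finset.range (k + 1), (k.choose l : ℚ_[p]) * (-1) ^ (k + l) * xi q⁻¹ (n - l) 2) := by
  rw [norm_sub_rev] at hq
  have hq0 : q ≠ 0 := norm_ne_zero_iff.mp (by simp [norm_eq_one_of_norm_sub_one_lt_one hq])
  simp only [bern_eq_sum hq0 hq1 hkn]
  exact fermionicIntegral_const_mul _ <| fermionicIntegral_sum _ fun l _ =>
    fermionicIntegral_const_mul _ (fermionicIntegral_qnum_inv_one_sub_pow hp hq hq0 (n - l))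
end

section
/- (Equation (23)) For all m, n, k ∈ ℕ with k ≤ n and k ≤ m, the fermionic p-adic q-integral of x ↦ B_{k,n}(x,q)·B_{k,m}(x,q) exists and ∫_{ℤ_p} B_{k,n}(x,q)·B_{k,m}(x,q) dμ_{−q}(x) = C(n,k)·C(m,k)·Σ_{l=0}^{n+m−2k} C(n+m−2k,l)·(−1)^l·ξ_{l+2k,q}. -/
open Finset Filter

/-! Since `[1-x]_{1/q} = 1 - [x]_q`, the product `B_{k,n} B_{k,m}` equals
`C(n,k) C(m,k) [x]_q^{2k} (1 - [x]_q)^{n+m-2k}`, a linear combination of the powers `[x]_q^j`,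
and each `[x]_q^j` is a linear combination of the geometric functions `x ↦ (q^i)^x`.
For these the Riemann sums are explicit: as `p^N` is odd they equal
`(1+r)/(1+r^{p^N}) · (1+(ar)^{p^N})/(1+ar)`, and `q^{p^N} → 1` because `q ∈ 1 + pℤ_p` gives
`q^{p^N} ∈ 1 + p^{N+1}ℤ_p`. Hence `∫ a^x dμ_{-r} = (1+r)/(1+ar)`, linearity gives
`∫ [x]_q^j dμ_{-q} = ξ_{j,q}`, and then the formula. -/

open Topology

theorem norm_one_sub_pow_le {R : Type*} [NormedRing R] [NormOneClass R] [IsUltrametricDist R]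
    {q : R} (hq : ‖q‖ ≤ 1) (j : ℕ) : ‖1 - q ^ j‖ ≤ ‖1 - q‖ := by
  rw [← mul_neg_geom_sum]
  refine (norm_mul_le _ _).trans (mul_le_of_le_one_right (norm_nonneg _) ?_)
  refine IsUltrametricDist.norm_sum_le_of_forall_le_of_nonneg zero_le_one fun i _ => ?_
  exact (norm_pow_le _ _).trans (pow_le_one₀ (norm_nonneg _) hq)

theorem one_sub_pow_eq_sum {R : Type*} [CommRing R] (t : R) (j : ℕ) :
    (1 - t) ^ j = ∑ i ∈ range (j + 1), (j.choose i : R) * (-1) ^ i * t ^ i := by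
  rw [sub_eq_neg_add, add_pow]
  refine sum_congr rfl fun i _ => ?_
  rw [neg_pow]
  ring

namespace Padic

variable {p : ℕ} [Fact p.Prime] {q : ℚ_[p]}

theorem norm_le_one_of_norm_one_sub_lt_one (hq : ‖1 - q‖ < 1) : ‖q‖ ≤ 1 := by
  simpa using (IsUltrametricDist.norm_add_le_max 1 (-(1 - q))).trans
    (by simpa [norm_sub_rev] using hq.le)

theorem one_add_ne_zero_of_norm_one_sub_lt_one (hp : Odd p) (hq : ‖1 - q‖ < 1) : 1 + q ≠ 0 := by
  intro h
  rw [← neg_eq_of_add_eq_zero_right h, sub_neg_eq_add, one_add_one_eq_two] at hq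
  have h2 : ‖((2 : ℕ) : ℚ_[p])‖ = 1 := norm_natCast_eq_one_iff.2 (Nat.coprime_two_right.2 hp)
  exact hq.ne (by exact_mod_cast h2)

theorem tendsto_pow_prime_pow_nhds_one (hq : ‖1 - q‖ < 1) :
    Tendsto (fun N => q ^ p ^ N) atTop (𝓝 1) := by
  set u : ℤ_[p] := ⟨q, norm_le_one_of_norm_one_sub_lt_one hq⟩
  have hu : (p : ℤ_[p]) ∣ u - 1 := by
    rw [← PadicInt.norm_lt_one_iff_dvd, norm_sub_rev]
    exact hq
  have hbound (N : ℕ) : ‖q ^ p ^ N - 1‖ ≤ ‖(p : ℚ_[p])‖ ^ (N + 1) := by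
    obtain ⟨c, hc⟩ := dvd_sub_pow_of_dvd_sub hu N
    rw [one_pow] at hc
    have hnorm : ‖q ^ p ^ N - 1‖ = ‖u ^ p ^ N - 1‖ := by
      rw [PadicInt.norm_def]
      push_cast
      rfl
    rw [hnorm, hc, norm_mul, norm_pow]
    exact mul_le_of_le_one_right (by positivity) (PadicInt.norm_le_one c)
  rw [tendsto_iff_norm_sub_tendsto_zero]
  refine squeeze_zero (fun _ => norm_nonneg _) hbound ?_
  exact (tendsto_pow_atTop_nhds_zero_of_lt_one (norm_nonneg _) norm_p_lt_one).comp
    (tendsto_add_atTop_nat 1)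

end Padic

section FermionicIntegral

variable {p : ℕ} [Fact p.Prime] {r : ℚ_[p]}

theorem fermionicIntegral.const_mul {g : ℕ → ℚ_[p]} {L : ℚ_[p]} (h : fermionicIntegral p r g L)
    (c : ℚ_[p]) : fermionicIntegral p r (fun x => c * g x) (c * L) := by
  refine (Tendsto.const_mul c h).congr fun N => ?_
  simp only [mul_sum]
  ring_nf

theorem fermionicIntegral.sum {ι : Type*} {s : Finset ι} {g : ι → ℕ → ℚ_[p]} {L : ι → ℚ_[p]}
    (h : ∀ i ∈ s, fermionicIntegral p r (g i) (L i)) :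
    fermionicIntegral p r (fun x => ∑ i ∈ s, g i x) (∑ i ∈ s, L i) := by
  refine (tendsto_finsetSum s h).congr fun N => ?_
  simp only [mul_sum, sum_mul]
  exact sum_comm

theorem fermionicIntegral_pow (hp : Odd p) {a : ℚ_[p]}
    (hr : Tendsto (fun N => r ^ p ^ N) atTop (𝓝 1)) (ha : Tendsto (fun N => a ^ p ^ N) atTop (𝓝 1))
    (har : 1 + a * r ≠ 0) :
    fermionicIntegral p r (fun x => a ^ x) ((1 + r) / (1 + a * r)) := by
  have hsum (N : ℕ) : (1 + r) / (1 - (-r) ^ p ^ N) * ∑ x ∈ range (p ^ N), a ^ x * (-r) ^ x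
      = (1 + r) * (1 + a ^ p ^ N * r ^ p ^ N) / ((1 + r ^ p ^ N) * (1 + a * r)) := by
    have hodd : Odd (p ^ N) := hp.pow
    have hne : a * -r ≠ 1 := fun h => har (by linear_combination -h)
    simp_rw [← mul_pow]
    rw [geom_sum_eq hne, hodd.neg_pow, mul_neg, hodd.neg_pow, mul_pow, ← div_mul_div_comm]
    congr 1
    · ring
    · rw [← neg_div_neg_eq]
      ring
  have hlim : Tendsto (fun N => (1 + r) * (1 + a ^ p ^ N * r ^ p ^ N) /
      ((1 + r ^ p ^ N) * (1 + a * r))) atTop (𝓝 ((1 + r) * (1 + 1 * 1) / ((1 + 1) * (1 + a * r)))) :=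
    (tendsto_const_nhds.mul (tendsto_const_nhds.add (ha.mul hr))).div
      ((tendsto_const_nhds.add hr).mul tendsto_const_nhds) (mul_ne_zero (by norm_num) har)
  unfold fermionicIntegral
  simp_rw [hsum]
  convert hlim using 2
  rw [mul_one, mul_comm (1 + 1 : ℚ_[p]), mul_div_mul_right _ _ (by norm_num)]

variable {q : ℚ_[p]}

theorem qnum_natCast_pow (x j : ℕ) :
    qnum q x ^ j =
      ∑ i ∈ range (j + 1), (j.choose i : ℚ_[p]) * (-1) ^ i / (1 - q) ^ j * (q ^ i) ^ x := by
  rw [qnum, zpow_natCast, div_pow, one_sub_pow_eq_sum, sum_div]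
  refine sum_congr rfl fun i _ => ?_
  rw [← pow_mul, ← pow_mul, mul_comm x i]
  ring

theorem fermionicIntegral_qnum_pow (hp : Odd p) (hq : ‖1 - q‖ < 1) (j : ℕ) :
    fermionicIntegral p q (fun x => qnum q x ^ j) (xi q j 0) := by
  have hlim := Padic.tendsto_pow_prime_pow_nhds_one hq
  have hpow (i : ℕ) :
      fermionicIntegral p q (fun x => (q ^ i) ^ x) ((1 + q) / (1 + q ^ (i + 1))) := by
    rw [pow_succ]
    refine fermionicIntegral_pow hp hlim ?_ ?_
    · simpa only [← pow_mul, mul_comm i, one_pow] using hlim.pow i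
    · rw [← pow_succ]
      exact Padic.one_add_ne_zero_of_norm_one_sub_lt_one hp
        ((norm_one_sub_pow_le (Padic.norm_le_one_of_norm_one_sub_lt_one hq) _).trans_lt hq)
  simp_rw [qnum_natCast_pow]
  convert fermionicIntegral.sum fun i _ =>
    (hpow i).const_mul ((j.choose i : ℚ_[p]) * (-1) ^ i / (1 - q) ^ j) using 1
  rw [xi, mul_sum]
  refine sum_congr rfl fun i _ => ?_
  rw [mul_zero, zpow_zero]
  ring

theorem qnum_inv_one_sub (hq0 : q ≠ 0) (hq1 : q ≠ 1) (x : ℤ) :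
    qnum q⁻¹ (1 - x) = 1 - qnum q x := by
  have h1 : 1 - q ≠ 0 := sub_ne_zero.2 hq1.symm
  have h2 : 1 - q⁻¹ ≠ 0 := sub_ne_zero.2 (by simpa [eq_comm] using hq1)
  rw [qnum, qnum, inv_zpow', neg_sub, zpow_sub₀ hq0, zpow_one]
  field_simp
  ring

theorem bern_mul_bern (hq0 : q ≠ 0) (hq1 : q ≠ 1) {k n m : ℕ} (hkn : k ≤ n) (hkm : k ≤ m)
    (x : ℤ) :
    bern q k n x * bern q k m x = (n.choose k : ℚ_[p]) * (m.choose k : ℚ_[p]) *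
      ∑ l ∈ range (n + m - 2 * k + 1),
        ((n + m - 2 * k).choose l : ℚ_[p]) * (-1) ^ l * qnum q x ^ (l + 2 * k) := by
  have hM : n - k + (m - k) = n + m - 2 * k := by omega
  calc bern q k n x * bern q k m x = (n.choose k : ℚ_[p]) * (m.choose k : ℚ_[p]) *
        (qnum q x ^ (2 * k) * (1 - qnum q x) ^ (n + m - 2 * k)) := by
        rw [bern, bern, qnum_inv_one_sub hq0 hq1, ← hM, pow_add, two_mul, pow_add]
        ring
    _ = _ := by
        rw [one_sub_pow_eq_sum, mul_sum]
        congr 1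
        refine sum_congr rfl fun l _ => ?_
        ring

end FermionicIntegral

theorem stmt15 (p : ℕ) [Fact p.Prime] (hp : Odd p) (q : ℚ_[p]) (hq : ‖1 - q‖ < 1) (hq1 : q ≠ 1) (m n k : ℕ) (hkn : k ≤ n) (hkm : k ≤ m) :
    fermionicIntegral p q (fun x => bern q k n x * bern q k m x)
      ((n.choose k : ℚ_[p]) * (m.choose k : ℚ_[p]) *
        ∑ l ∈ Finset.range (n + m - 2 * k + 1),
          ((n + m - 2 * k).choose l : ℚ_[p]) * (-1) ^ l * xi q (l + 2 * k) 0) := by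
  have hq0 : q ≠ 0 := by
    rintro rfl
    simp at hq
  simp_rw [bern_mul_bern hq0 hq1 hkn hkm]
  exact (fermionicIntegral.sum fun l _ =>
    (fermionicIntegral_qnum_pow hp hq (l + 2 * k)).const_mul _).const_mul _
end
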